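/- Let f : ℝⁿ → ℝ be differentiable with L-Lipschitz gradient on ℝⁿ, and let e₁,…,eₙ denote the standard basis of ℝⁿ. Then for every x ∈ ℝⁿ and δ > 0, both the forward finite-difference approximation G_f(x,δ) := δ⁻¹ Σ_{i=1}^n (f(x + δe_i) − f(x)) e_i and the central finite-difference approximation G_c(x,δ) := (2δ)⁻¹ Σ_{i=1}^n (f(x + δe_i) − f(x − δe_i)) e_i satisfy ‖G(x,δ) − ∇f(x)‖ ≤ L√n·δ/2. -/

import Mathlib

/-!
Along the segment `t ↦ x + t • v`, the Taylor remainder `f (x + t • v) - f x - t ⟪∇f x, v⟫`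
vanishes at `0` and has derivative `⟪∇f (x + t • v) - ∇f x, v⟫`, of size at most `L t ‖v‖²`;
comparing with `L t² ‖v‖² / 2` bounds it by `L ‖v‖² / 2` at `t = 1`. With `v = ±δ eⱼ`, the
`j`-th coordinate of either finite-difference error is such a remainder (or half the difference
of two) divided by `δ`, so it is at most `L δ / 2`, and the Euclidean norm is at most `√n` times that.
-/

open RealInnerProductSpace

section

variable {E : Type*} [NormedAddCommGroup E] [InnerProductSpace ℝ E] [CompleteSpace E]

theorem Differentiable.hasDerivAt_comp_add_smul {f : E → ℝ} (hf : Differentiable ℝ f)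
    (x v : E) (t : ℝ) :
    HasDerivAt (fun s : ℝ => f (x + s • v)) ⟪gradient f (x + t • v), v⟫ t := by
  have hline : HasDerivAt (fun s : ℝ => x + s • v) v t := by
    simpa using ((hasDerivAt_id t).smul_const v).const_add x
  exact (hf _).hasGradientAt.hasFDerivAt.comp_hasDerivAt t hline |>.congr_deriv
    (InnerProductSpace.toDual_apply_apply ..)

theorem abs_sub_sub_inner_gradient_le {f : E → ℝ} (hf : Differentiable ℝ f) {L : ℝ}
    (hlip : ∀ x y, ‖gradient f x - gradient f y‖ ≤ L * ‖x - y‖) (x v : E) :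
    |f (x + v) - f x - ⟪gradient f x, v⟫| ≤ L / 2 * ‖v‖ ^ 2 := by
  set φ : ℝ → ℝ := fun t => f (x + t • v) - f x - t * ⟪gradient f x, v⟫
  have hφ : ∀ t, HasDerivAt φ ⟪gradient f (x + t • v) - gradient f x, v⟫ t := fun t => by
    rw [inner_sub_left]
    exact ((hf.hasDerivAt_comp_add_smul x v t).sub_const _).sub
      ((hasDerivAt_id t).mul_const _) |>.congr_deriv (by simp)
  have hbound : ∀ t ∈ Set.Ico (0 : ℝ) 1, ‖⟪gradient f (x + t • v) - gradient f x, v⟫‖ ≤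
      L * ‖v‖ ^ 2 * t := fun t ht => calc
    _ ≤ ‖gradient f (x + t • v) - gradient f x‖ * ‖v‖ := norm_inner_le_norm _ _
    _ ≤ L * ‖x + t • v - x‖ * ‖v‖ := by gcongr; exact hlip _ _
    _ = L * ‖v‖ ^ 2 * t := by
      rw [add_sub_cancel_left, norm_smul, Real.norm_of_nonneg ht.1]; ring
  have hB : ∀ t, HasDerivAt (fun t => L / 2 * ‖v‖ ^ 2 * t ^ 2) (L * ‖v‖ ^ 2 * t) t := fun t =>
    ((hasDerivAt_pow 2 t).const_mul (L / 2 * ‖v‖ ^ 2)).congr_deriv (by push_cast; ring)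
  have hφ1 := image_norm_le_of_norm_deriv_right_le_deriv_boundary
    (fun t _ => (hφ t).continuousAt.continuousWithinAt) (fun t _ => (hφ t).hasDerivWithinAt)
    (by simp [φ]) hB hbound (Set.right_mem_Icc.2 zero_le_one)
  simpa [φ] using hφ1

theorem abs_sub_sub_two_inner_gradient_le {f : E → ℝ} (hf : Differentiable ℝ f) {L : ℝ}
    (hlip : ∀ x y, ‖gradient f x - gradient f y‖ ≤ L * ‖x - y‖) (x v : E) :
    |f (x + v) - f (x - v) - 2 * ⟪gradient f x, v⟫| ≤ L * ‖v‖ ^ 2 := by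
  have hplus := abs_sub_sub_inner_gradient_le hf hlip x v
  have hminus := abs_sub_sub_inner_gradient_le hf hlip x (-v)
  rw [← sub_eq_add_neg, inner_neg_right, norm_neg] at hminus
  calc _ = |(f (x + v) - f x - ⟪gradient f x, v⟫) - (f (x - v) - f x - -⟪gradient f x, v⟫)| := by
        ring_nf
    _ ≤ L / 2 * ‖v‖ ^ 2 + L / 2 * ‖v‖ ^ 2 := (abs_sub _ _).trans (add_le_add hplus hminus)
    _ = L * ‖v‖ ^ 2 := by ring

end

theorem EuclideanSpace.norm_le_sqrt_card_mul {ι : Type*} [Fintype ι] {w : EuclideanSpace ℝ ι}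
    {C : ℝ} (h : ∀ i, |w i| ≤ C) : ‖w‖ ≤ √(Fintype.card ι) * C := by
  cases isEmpty_or_nonempty ι
  · simp [Subsingleton.elim w 0]
  have hC : 0 ≤ C := (abs_nonneg _).trans (h (Classical.arbitrary ι))
  calc ‖w‖ = √(∑ i, |w i| ^ 2) := by simp [EuclideanSpace.norm_eq]
    _ ≤ √(∑ _i : ι, C ^ 2) := by gcongr with i; exact h i
    _ = √(Fintype.card ι) * C := by
      rw [Finset.sum_const, Finset.card_univ, nsmul_eq_mul, Real.sqrt_mul (Nat.cast_nonneg _),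
        Real.sqrt_sq hC]

theorem EuclideanSpace.sum_smul_single_one_apply {ι : Type*} [Fintype ι] [DecidableEq ι]
    (c : ι → ℝ) (j : ι) : (∑ i, c i • EuclideanSpace.single i (1 : ℝ)) j = c j := by
  simp [Pi.single_apply]

theorem abs_inv_mul_sub_le {δ a b c : ℝ} (hδ : 0 < δ) (h : |a - δ * b| ≤ c) :
    |δ⁻¹ * a - b| ≤ δ⁻¹ * c := by
  rw [show δ⁻¹ * a - b = δ⁻¹ * (a - δ * b) by field_simp, abs_mul, abs_of_pos (inv_pos.2 hδ)]
  gcongr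

theorem finite_difference_error_bounds_general {n : ℕ}
    (f : EuclideanSpace ℝ (Fin n) → ℝ)
    (hdiff : Differentiable ℝ f)
    (L : ℝ)
    (hlip : ∀ x y : EuclideanSpace ℝ (Fin n),
      ‖gradient f x - gradient f y‖ ≤ L * ‖x - y‖)
    (e : Fin n → EuclideanSpace ℝ (Fin n))
    (he : ∀ i, e i = EuclideanSpace.single i (1:ℝ))
    (x : EuclideanSpace ℝ (Fin n)) (δ : ℝ) (hδ : 0 < δ) :
    ‖(δ⁻¹ • ∑ i : Fin n, (f (x + δ • e i) - f x) • e i) - gradient f x‖ ≤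
      L * Real.sqrt n * δ / 2 ∧
    ‖((2*δ)⁻¹ • ∑ i : Fin n, (f (x + δ • e i) - f (x - δ • e i)) • e i) - gradient f x‖ ≤
      L * Real.sqrt n * δ / 2 := by
  simp only [he]
  have hinner : ∀ j, ⟪gradient f x, δ • EuclideanSpace.single j 1⟫ = δ * gradient f x j :=
    fun j => by rw [real_inner_smul_right, EuclideanSpace.inner_single_right]; simp
  have hnorm : ∀ j : Fin n, ‖δ • EuclideanSpace.single j (1 : ℝ)‖ = δ := fun j => by
    rw [norm_smul, PiLp.norm_single, norm_one, mul_one, Real.norm_of_nonneg hδ.le]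
  have hcard : √(Fintype.card (Fin n)) * (L * δ / 2) = L * √n * δ / 2 := by
    rw [Fintype.card_fin]; ring
  constructor
  · refine (EuclideanSpace.norm_le_sqrt_card_mul fun j => ?_).trans_eq hcard
    have hrem := abs_sub_sub_inner_gradient_le hdiff hlip x (δ • EuclideanSpace.single j 1)
    rw [hinner, hnorm] at hrem
    rw [PiLp.sub_apply, PiLp.smul_apply, EuclideanSpace.sum_smul_single_one_apply, smul_eq_mul]
    exact (abs_inv_mul_sub_le hδ hrem).trans_eq (by field_simp)
  · refine (EuclideanSpace.norm_le_sqrt_card_mul fun j => ?_).trans_eq hcard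
    have hrem := abs_sub_sub_two_inner_gradient_le hdiff hlip x (δ • EuclideanSpace.single j 1)
    rw [hinner, hnorm, ← mul_assoc] at hrem
    rw [PiLp.sub_apply, PiLp.smul_apply, EuclideanSpace.sum_smul_single_one_apply, smul_eq_mul]
    exact (abs_inv_mul_sub_le (by positivity) hrem).trans_eq (by field_simp)

/-- Error bounds for the forward and central finite-difference approximations of the
gradient of a function with `L`-Lipschitz gradient:
`‖G(x,δ) - ∇f(x)‖ ≤ L√n·δ/2`. -/
theorem finite_difference_error_bounds {n : ℕ}
    (f : EuclideanSpace ℝ (Fin n) → ℝ)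
    (hdiff : Differentiable ℝ f)
    (L : ℝ) (hL : 0 < L)
    (hlip : ∀ x y : EuclideanSpace ℝ (Fin n),
      ‖gradient f x - gradient f y‖ ≤ L * ‖x - y‖)
    (e : Fin n → EuclideanSpace ℝ (Fin n))
    (he : ∀ i, e i = EuclideanSpace.single i (1:ℝ))
    (x : EuclideanSpace ℝ (Fin n)) (δ : ℝ) (hδ : 0 < δ) :
    ‖(δ⁻¹ • ∑ i : Fin n, (f (x + δ • e i) - f x) • e i) - gradient f x‖ ≤
      L * Real.sqrt n * δ / 2 ∧
    ‖((2*δ)⁻¹ • ∑ i : Fin n, (f (x + δ • e i) - f (x - δ • e i)) • e i) - gradient f x‖ ≤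
      L * Real.sqrt n * δ / 2 :=
  finite_difference_error_bounds_general f hdiff L hlip e he x δ hδ
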